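/- arXiv:1203.1376 — 8 statements merged into one kernel-verified Lean document; each statement's English description precedes it below -/
import Mathlib

section
/- Case (a) of the s.d.o.f. region: Assume additionally NE ≤ r0 − r1 and NE ≤ r0 − r2. Then the convex hull of P = {p0, p1, p2, p3, p4} in ℝ² equals the polytope {(d1, d2) ∈ ℝ² : 0 ≤ d1 ≤ r1 − NE, 0 ≤ d2 ≤ r2 − NE, d1 + d2 ≤ r0 − 2·NE}. -/
/-!
The region is a pentagon cut out of the rectangle `[0, r1 - NE] × [0, r2 - NE]` by the line
`d1 + d2 = r0 - 2 NE`; the case (a) hypotheses say that this line meets the two far sides of the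
rectangle, at the corner points `p3` and `p4`. All maxima then drop out. The hull lies in the
region because the region is an intersection of half-planes containing the five points.
Conversely, a point `(x, y)` of the region lies on the horizontal chord at height `y`, whose left
end is on the segment `p0 p2` and whose right end is on `p1 p3` or on `p3 p4`.
-/

open Set
open scoped Convex

theorem add_smul_mem_segment {𝕜 E : Type*} [Field 𝕜] [LinearOrder 𝕜] [IsStrictOrderedRing 𝕜]
    [AddCommGroup E] [Module 𝕜 E] (p d : E) {u v t : 𝕜} (ht : t ∈ Icc u v) :
    p + t • d ∈ [p + u • d -[𝕜] p + v • d] := by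
  rw [← segment_eq_Icc (ht.1.trans ht.2)] at ht
  obtain ⟨α, β, hα, hβ, hαβ, rfl⟩ := ht
  exact ⟨α, β, hα, hβ, hαβ, by linear_combination (norm := module) hαβ • p⟩

section Pentagon

variable {a b c : ℝ}

theorem convex_setOf_pentagon (a b c : ℝ) :
    Convex ℝ {d : ℝ × ℝ | 0 ≤ d.1 ∧ d.1 ≤ a ∧ 0 ≤ d.2 ∧ d.2 ≤ b ∧ d.1 + d.2 ≤ c} :=
  (convex_halfSpace_ge (LinearMap.fst ℝ ℝ ℝ).isLinear 0).inter <|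
    (convex_halfSpace_le (LinearMap.fst ℝ ℝ ℝ).isLinear a).inter <|
    (convex_halfSpace_ge (LinearMap.snd ℝ ℝ ℝ).isLinear 0).inter <|
    (convex_halfSpace_le (LinearMap.snd ℝ ℝ ℝ).isLinear b).inter <|
    convex_halfSpace_le (LinearMap.fst ℝ ℝ ℝ + LinearMap.snd ℝ ℝ ℝ).isLinear c

theorem convexHull_pentagon_subset (ha : a ≤ c) (hb : b ≤ c) (hc : c ≤ a + b) :
    convexHull ℝ {((0 : ℝ), (0 : ℝ)), (a, 0), (0, b), (a, c - a), (c - b, b)} ⊆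
      {d : ℝ × ℝ | 0 ≤ d.1 ∧ d.1 ≤ a ∧ 0 ≤ d.2 ∧ d.2 ≤ b ∧ d.1 + d.2 ≤ c} := by
  refine convexHull_min ?_ (convex_setOf_pentagon a b c)
  simp only [insert_subset_iff, singleton_subset_iff, mem_ofPred_eq]
  refine ⟨?_, ?_, ?_, ?_, ?_⟩ <;> refine ⟨?_, ?_, ?_, ?_, ?_⟩ <;> linarith

theorem setOf_pentagon_subset_convexHull :
    {d : ℝ × ℝ | 0 ≤ d.1 ∧ d.1 ≤ a ∧ 0 ≤ d.2 ∧ d.2 ≤ b ∧ d.1 + d.2 ≤ c} ⊆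
      convexHull ℝ {((0 : ℝ), (0 : ℝ)), (a, 0), (0, b), (a, c - a), (c - b, b)} := by
  set P : Set (ℝ × ℝ) := {((0 : ℝ), (0 : ℝ)), (a, 0), (0, b), (a, c - a), (c - b, b)}
  have edge {p q z : ℝ × ℝ} (hz : z ∈ [p -[ℝ] q]) (hp : p ∈ P) (hq : q ∈ P) :
      z ∈ convexHull ℝ P :=
    (convex_convexHull ℝ P).segment_subset (subset_convexHull ℝ P hp) (subset_convexHull ℝ P hq) hz
  rintro ⟨x, y⟩ ⟨hx0, hxa, hy0, hyb, hxy⟩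
  have hleft : ((0 : ℝ), y) ∈ [((0 : ℝ), (0 : ℝ)) -[ℝ] (0, b)] := by
    simpa using add_smul_mem_segment ((0 : ℝ), (0 : ℝ)) ((0 : ℝ), (1 : ℝ)) ⟨hy0, hyb⟩
  have chord {x' : ℝ} (hx' : x ≤ x') (hright : (x', y) ∈ convexHull ℝ P) :
      (x, y) ∈ convexHull ℝ P := by
    refine (convex_convexHull ℝ P).segment_subset (edge hleft (by simp [P]) (by simp [P])) hright ?_
    simpa using add_smul_mem_segment ((0 : ℝ), y) ((1 : ℝ), (0 : ℝ)) ⟨hx0, hx'⟩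
  obtain hya | hya := le_total y (c - a)
  · have hright : (a, y) ∈ [(a, (0 : ℝ)) -[ℝ] (a, c - a)] := by
      simpa using add_smul_mem_segment (a, (0 : ℝ)) ((0 : ℝ), (1 : ℝ)) ⟨hy0, hya⟩
    exact chord hxa (edge hright (by simp [P]) (by simp [P]))
  · have hright : (c - y, y) ∈ [(c - b, b) -[ℝ] (a, c - a)] := by
      have hcy : c - y ∈ Icc (c - b) a := ⟨by linarith, by linarith⟩
      simpa [sub_eq_add_neg] using add_smul_mem_segment ((0 : ℝ), c) ((1 : ℝ), (-1 : ℝ)) hcy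
    exact chord (by linarith) (edge hright (by simp [P]) (by simp [P]))

theorem convexHull_pentagon (ha : a ≤ c) (hb : b ≤ c) (hc : c ≤ a + b) :
    convexHull ℝ {((0 : ℝ), (0 : ℝ)), (a, 0), (0, b), (a, c - a), (c - b, b)} =
      {d : ℝ × ℝ | 0 ≤ d.1 ∧ d.1 ≤ a ∧ 0 ≤ d.2 ∧ d.2 ≤ b ∧ d.1 + d.2 ≤ c} :=
  (convexHull_pentagon_subset ha hb hc).antisymm setOf_pentagon_subset_convexHull

end Pentagon

theorem sdof_region_case_a_general (r0 r1 r2 NE : ℝ)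
    (h0 : r0 ≤ r1 + r2)
    (ha1 : NE ≤ r0 - r1) (ha2 : NE ≤ r0 - r2) :
    convexHull ℝ ({((0 : ℝ), (0 : ℝ)),
        (max (r1 - NE) 0, 0),
        (0, max (r2 - NE) 0),
        (max (r1 - NE) 0, max (r0 - r1 - NE) 0),
        (max (r0 - r2 - NE) 0, max (r2 - NE) 0)} : Set (ℝ × ℝ)) =
      {d : ℝ × ℝ | 0 ≤ d.1 ∧ d.1 ≤ r1 - NE ∧ 0 ≤ d.2 ∧ d.2 ≤ r2 - NE ∧
        d.1 + d.2 ≤ r0 - 2 * NE} := by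
  have hpentagon := convexHull_pentagon (a := r1 - NE) (b := r2 - NE) (c := r0 - 2 * NE)
    (by linarith) (by linarith) (by linarith)
  rw [show r0 - 2 * NE - (r1 - NE) = r0 - r1 - NE by ring,
    show r0 - 2 * NE - (r2 - NE) = r0 - r2 - NE by ring] at hpentagon
  rwa [max_eq_left (by linarith : (0 : ℝ) ≤ r1 - NE), max_eq_left (by linarith : (0 : ℝ) ≤ r2 - NE),
    max_eq_left (by linarith : (0 : ℝ) ≤ r0 - r1 - NE),
    max_eq_left (by linarith : (0 : ℝ) ≤ r0 - r2 - NE)]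

/-- Case (a) of the s.d.o.f. region: if `NE ≤ r0 - r1` and `NE ≤ r0 - r2`, the convex
hull of the five corner points equals the polymatroid
`{(d1,d2) : 0 ≤ d1 ≤ r1 - NE, 0 ≤ d2 ≤ r2 - NE, d1 + d2 ≤ r0 - 2 NE}`. -/
theorem sdof_region_case_a (r0 r1 r2 NE : ℝ)
    (hNE : 0 ≤ NE) (h1 : r1 ≤ r0) (h2 : r2 ≤ r0) (h0 : r0 ≤ r1 + r2)
    (ha1 : NE ≤ r0 - r1) (ha2 : NE ≤ r0 - r2) :
    convexHull ℝ ({((0 : ℝ), (0 : ℝ)),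
        (max (r1 - NE) 0, 0),
        (0, max (r2 - NE) 0),
        (max (r1 - NE) 0, max (r0 - r1 - NE) 0),
        (max (r0 - r2 - NE) 0, max (r2 - NE) 0)} : Set (ℝ × ℝ)) =
      {d : ℝ × ℝ | 0 ≤ d.1 ∧ d.1 ≤ r1 - NE ∧ 0 ≤ d.2 ∧ d.2 ≤ r2 - NE ∧
        d.1 + d.2 ≤ r0 - 2 * NE} :=
  sdof_region_case_a_general r0 r1 r2 NE h0 ha1 ha2
end

section
/- Case (b) of the s.d.o.f. region: Assume additionally r1 ≤ r2, r0 − r2 ≤ NE ≤ r0 − r1, and NE < r1. Then the convex hull of P = {p0, p1, p2, p3, p4} in ℝ² equals the polytope {(d1, d2) ∈ ℝ² : 0 ≤ d1 ≤ r1 − NE, 0 ≤ d2, and (r1 + r2 − r0)·d1 + (r1 − NE)·d2 ≤ (r1 − NE)·(r2 − NE)}. -/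
/-!
Under the case (b) hypotheses the maxima in the corner points resolve, `p4` coincides with `p2`,
and, writing `a = r1 - NE`, `b = r2 - NE`, `c = r0 - r1 - NE` (so that `r1 + r2 - r0 = b - c`),
the hull is that of the quadrilateral `(0,0), (a,0), (0,b), (a,c)`. This is the trapezoid lying
over `[0, a]` below the segment from `(0,b)` to `(a,c)`: it is convex and contains the four
vertices, and conversely each of its points lies on a vertical segment joining a point of the
bottom edge to a point of the top edge.
-/

open Set

def trapezoid (a b c : ℝ) : Set (ℝ × ℝ) :=
  {p | 0 ≤ p.1 ∧ p.1 ≤ a ∧ 0 ≤ p.2 ∧ (b - c) * p.1 + a * p.2 ≤ a * b}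

theorem Convex.mk_mem_of_mem_Icc {E : Type*} [AddCommGroup E] [Module ℝ E] {s : Set (E × ℝ)}
    (hs : Convex ℝ s) {x : E} {u v y : ℝ} (hu : (x, u) ∈ s) (hv : (x, v) ∈ s)
    (hy : y ∈ Icc u v) : (x, y) ∈ s :=
  hs.segment_subset hu hv <| Prod.image_mk_segment_right (𝕜 := ℝ) x u v ▸
    ⟨y, by rwa [segment_eq_Icc (hy.1.trans hy.2)], rfl⟩

section Trapezoid

variable {a b c : ℝ}

theorem convex_trapezoid : Convex ℝ (trapezoid a b c) := by
  rintro p ⟨hp1, hpa, hp2, hp⟩ q ⟨hq1, hqa, hq2, hq⟩ u v hu hv huv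
  simp only [trapezoid, mem_ofPred_eq, Prod.fst_add, Prod.snd_add, Prod.smul_fst, Prod.smul_snd,
    smul_eq_mul]
  refine ⟨by positivity, ?_, by positivity, ?_⟩
  · calc u * p.1 + v * q.1 ≤ u * a + v * a := by gcongr
      _ = a := by rw [← add_mul, huv, one_mul]
  · calc (b - c) * (u * p.1 + v * q.1) + a * (u * p.2 + v * q.2)
        = u * ((b - c) * p.1 + a * p.2) + v * ((b - c) * q.1 + a * q.2) := by ring
      _ ≤ u * (a * b) + v * (a * b) := by gcongr
      _ = a * b := by rw [← add_mul, huv, one_mul]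

theorem quadrilateral_subset_trapezoid (ha : 0 ≤ a) (hb : 0 ≤ b) (hc : 0 ≤ c) :
    ({(0, 0), (a, 0), (0, b), (a, c)} : Set (ℝ × ℝ)) ⊆ trapezoid a b c := by
  simp only [insert_subset_iff, singleton_subset_iff, trapezoid, mem_ofPred_eq]
  refine ⟨?_, ?_, ?_, ?_⟩ <;> refine ⟨?_, ?_, ?_, ?_⟩ <;> nlinarith [mul_nonneg ha hb]

theorem trapezoid_subset_convexHull (ha : 0 < a) :
    trapezoid a b c ⊆ convexHull ℝ {(0, 0), (a, 0), (0, b), (a, c)} := by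
  set Q : Set (ℝ × ℝ) := {(0, 0), (a, 0), (0, b), (a, c)}
  rintro ⟨x, y⟩ ⟨hx0, hxa, hy0, hxy⟩
  dsimp only at hx0 hxa hy0 hxy
  set t := x / a
  have hxt : t * a = x := div_mul_cancel₀ x ha.ne'
  have hcombo : ∀ p ∈ Q, ∀ q ∈ Q, (1 - t) • p + t • q ∈ convexHull ℝ Q := fun p hp q hq ↦
    convex_convexHull ℝ Q (subset_convexHull ℝ Q hp) (subset_convexHull ℝ Q hq)
      (sub_nonneg.2 ((div_le_one ha).2 hxa)) (div_nonneg hx0 ha.le) (sub_add_cancel 1 t)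
  have hbottom : (x, (0 : ℝ)) ∈ convexHull ℝ Q := by
    convert hcombo (0, 0) (by simp [Q]) (a, 0) (by simp [Q]) using 1
    ext <;> simp [hxt]
  have htop : (x, (1 - t) * b + t * c) ∈ convexHull ℝ Q := by
    convert hcombo (0, b) (by simp [Q]) (a, c) (by simp [Q]) using 1
    ext <;> simp [hxt]
  have hy : y ≤ (1 - t) * b + t * c :=
    le_of_mul_le_mul_left (by rw [← hxt] at hxy; linear_combination hxy) ha
  exact (convex_convexHull ℝ Q).mk_mem_of_mem_Icc hbottom htop ⟨hy0, hy⟩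

theorem convexHull_quadrilateral_eq_trapezoid (ha : 0 < a) (hb : 0 ≤ b) (hc : 0 ≤ c) :
    convexHull ℝ {(0, 0), (a, 0), (0, b), (a, c)} = trapezoid a b c :=
  (convexHull_min (quadrilateral_subset_trapezoid ha.le hb hc) convex_trapezoid).antisymm
    (trapezoid_subset_convexHull ha)

end Trapezoid

theorem sdof_region_case_b_general (r0 r1 r2 NE : ℝ)
    (h12 : r1 ≤ r2) (hb1 : r0 - r2 ≤ NE) (hb2 : NE ≤ r0 - r1) (hb3 : NE < r1) :
    convexHull ℝ ({((0 : ℝ), (0 : ℝ)),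
        (max (r1 - NE) 0, 0),
        (0, max (r2 - NE) 0),
        (max (r1 - NE) 0, max (r0 - r1 - NE) 0),
        (max (r0 - r2 - NE) 0, max (r2 - NE) 0)} : Set (ℝ × ℝ)) =
      {d : ℝ × ℝ | 0 ≤ d.1 ∧ d.1 ≤ r1 - NE ∧ 0 ≤ d.2 ∧
        (r1 + r2 - r0) * d.1 + (r1 - NE) * d.2 ≤ (r1 - NE) * (r2 - NE)} := by
  have ha : 0 < r1 - NE := sub_pos.2 hb3
  have hb : 0 ≤ r2 - NE := sub_nonneg.2 (hb3.le.trans h12)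
  have hc : 0 ≤ r0 - r1 - NE := by linarith
  rw [max_eq_left ha.le, max_eq_left hb, max_eq_left hc, max_eq_right (by linarith),
    show r1 + r2 - r0 = (r2 - NE) - (r0 - r1 - NE) by ring]
  have hp4_eq_p2 : ({(0, 0), (r1 - NE, 0), (0, r2 - NE), (r1 - NE, r0 - r1 - NE), (0, r2 - NE)} :
      Set (ℝ × ℝ)) = {(0, 0), (r1 - NE, 0), (0, r2 - NE), (r1 - NE, r0 - r1 - NE)} := by
    ext
    simp only [mem_insert_iff, mem_singleton_iff]
    tauto
  rw [hp4_eq_p2]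
  exact convexHull_quadrilateral_eq_trapezoid ha hb hc

/-- Case (b) of the s.d.o.f. region: if `r1 ≤ r2`, `r0 - r2 ≤ NE ≤ r0 - r1` and
`NE < r1`, the convex hull of the five corner points equals the polytope
`{(d1,d2) : 0 ≤ d1 ≤ r1 - NE, 0 ≤ d2,
  (r1 + r2 - r0) d1 + (r1 - NE) d2 ≤ (r1 - NE)(r2 - NE)}`. -/
theorem sdof_region_case_b (r0 r1 r2 NE : ℝ)
    (hNE : 0 ≤ NE) (h1 : r1 ≤ r0) (h2 : r2 ≤ r0) (h0 : r0 ≤ r1 + r2)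
    (h12 : r1 ≤ r2) (hb1 : r0 - r2 ≤ NE) (hb2 : NE ≤ r0 - r1) (hb3 : NE < r1) :
    convexHull ℝ ({((0 : ℝ), (0 : ℝ)),
        (max (r1 - NE) 0, 0),
        (0, max (r2 - NE) 0),
        (max (r1 - NE) 0, max (r0 - r1 - NE) 0),
        (max (r0 - r2 - NE) 0, max (r2 - NE) 0)} : Set (ℝ × ℝ)) =
      {d : ℝ × ℝ | 0 ≤ d.1 ∧ d.1 ≤ r1 - NE ∧ 0 ≤ d.2 ∧
        (r1 + r2 - r0) * d.1 + (r1 - NE) * d.2 ≤ (r1 - NE) * (r2 - NE)} :=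
  sdof_region_case_b_general r0 r1 r2 NE h12 hb1 hb2 hb3
end

section
/- Case (c) of the s.d.o.f. region: Assume additionally r0 − r1 ≤ NE, r0 − r2 ≤ NE, NE < r1, and NE < r2. Then the convex hull of P = {p0, p1, p2, p3, p4} in ℝ² equals the triangle {(d1, d2) ∈ ℝ² : 0 ≤ d1, 0 ≤ d2, and (r2 − NE)·d1 + (r1 − NE)·d2 ≤ (r1 − NE)·(r2 − NE)} (equivalently, d1/(r1−NE) + d2/(r2−NE) ≤ 1). -/
section Triangle

variable {𝕜 E : Type*} [Field 𝕜] [LinearOrder 𝕜] [IsStrictOrderedRing 𝕜]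
  [AddCommGroup E] [Module 𝕜 E]

theorem smul_add_smul_mem_convexHull_insert_zero {u v : E} {s t : 𝕜} (hs : 0 ≤ s) (ht : 0 ≤ t)
    (hst : s + t ≤ 1) : s • u + t • v ∈ convexHull 𝕜 {0, u, v} := by
  have h := (convex_convexHull 𝕜 ({0, u, v} : Set E)).sum_mem (t := Finset.univ)
    (w := ![1 - s - t, s, t]) (z := ![0, u, v])
    (by simp [Fin.forall_fin_succ, hs, ht, le_sub_iff_add_le', hst])
    (by simp only [Fin.sum_univ_three, Matrix.cons_val]; ring)
    (fun i _ => subset_convexHull 𝕜 _ (by fin_cases i <;> simp))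
  simpa [Fin.sum_univ_three] using h

theorem convex_triangle (a b c : 𝕜) :
    Convex 𝕜 {d : 𝕜 × 𝕜 | 0 ≤ d.1 ∧ 0 ≤ d.2 ∧ b * d.1 + a * d.2 ≤ c} := by
  intro x ⟨hx1, hx2, hx3⟩ y ⟨hy1, hy2, hy3⟩ s t hs ht hst
  simp only [Set.mem_ofPred_eq, Prod.fst_add, Prod.snd_add, Prod.smul_fst, Prod.smul_snd,
    smul_eq_mul]
  refine ⟨by positivity, by positivity, ?_⟩
  calc b * (s * x.1 + t * y.1) + a * (s * x.2 + t * y.2)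
      = s * (b * x.1 + a * x.2) + t * (b * y.1 + a * y.2) := by ring
    _ ≤ s * c + t * c := by gcongr
    _ = c := by rw [← add_mul, hst, one_mul]

theorem convexHull_triangle {a b : 𝕜} (ha : 0 < a) (hb : 0 < b) :
    convexHull 𝕜 {(0, 0), (a, 0), (0, b)} =
      {d : 𝕜 × 𝕜 | 0 ≤ d.1 ∧ 0 ≤ d.2 ∧ b * d.1 + a * d.2 ≤ a * b} := by
  refine (convexHull_min ?_ (convex_triangle a b _)).antisymm ?_
  · rintro x (rfl | rfl | rfl) <;> simp [ha.le, hb.le, mul_comm, mul_nonneg]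
  · rintro d ⟨hd1, hd2, hd3⟩
    have hd : d = (d.1 / a) • (a, 0) + (d.2 / b) • (0, b) := by
      ext <;> simp [ha.ne', hb.ne']
    rw [hd]
    refine smul_add_smul_mem_convexHull_insert_zero (by positivity) (by positivity) ?_
    rw [div_add_div _ _ ha.ne' hb.ne', div_le_one (by positivity)]
    linarith

end Triangle

theorem sdof_region_case_c_general (r0 r1 r2 NE : ℝ)
    (hc1 : r0 - r1 ≤ NE) (hc2 : r0 - r2 ≤ NE) (hc3 : NE < r1) (hc4 : NE < r2) :
    convexHull ℝ ({((0 : ℝ), (0 : ℝ)),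
        (max (r1 - NE) 0, 0),
        (0, max (r2 - NE) 0),
        (max (r1 - NE) 0, max (r0 - r1 - NE) 0),
        (max (r0 - r2 - NE) 0, max (r2 - NE) 0)} : Set (ℝ × ℝ)) =
      {d : ℝ × ℝ | 0 ≤ d.1 ∧ 0 ≤ d.2 ∧
        (r2 - NE) * d.1 + (r1 - NE) * d.2 ≤ (r1 - NE) * (r2 - NE)} := by
  have ha : 0 < r1 - NE := sub_pos.mpr hc3
  have hb : 0 < r2 - NE := sub_pos.mpr hc4
  -- In case (c) the corners p3 and p4 collapse onto p1 and p2.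
  rw [max_eq_left ha.le, max_eq_left hb.le, max_eq_right (by linarith : r0 - r1 - NE ≤ 0),
    max_eq_right (by linarith : r0 - r2 - NE ≤ 0), ← convexHull_triangle ha hb]
  congr 1
  simp [Set.insert_comm]

/-- Case (c) of the s.d.o.f. region: if `r0 - r1 ≤ NE`, `r0 - r2 ≤ NE`, `NE < r1`
and `NE < r2`, the convex hull of the five corner points equals the triangle
`{(d1,d2) : 0 ≤ d1, 0 ≤ d2, (r2 - NE) d1 + (r1 - NE) d2 ≤ (r1 - NE)(r2 - NE)}`. -/
theorem sdof_region_case_c (r0 r1 r2 NE : ℝ)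
    (hNE : 0 ≤ NE) (h1 : r1 ≤ r0) (h2 : r2 ≤ r0) (h0 : r0 ≤ r1 + r2)
    (hc1 : r0 - r1 ≤ NE) (hc2 : r0 - r2 ≤ NE) (hc3 : NE < r1) (hc4 : NE < r2) :
    convexHull ℝ ({((0 : ℝ), (0 : ℝ)),
        (max (r1 - NE) 0, 0),
        (0, max (r2 - NE) 0),
        (max (r1 - NE) 0, max (r0 - r1 - NE) 0),
        (max (r0 - r2 - NE) 0, max (r2 - NE) 0)} : Set (ℝ × ℝ)) =
      {d : ℝ × ℝ | 0 ≤ d.1 ∧ 0 ≤ d.2 ∧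
        (r2 - NE) * d.1 + (r1 - NE) * d.2 ≤ (r1 - NE) * (r2 - NE)} :=
  sdof_region_case_c_general r0 r1 r2 NE hc1 hc2 hc3 hc4
end

section
/- Rectangle interpretation of the s.d.o.f. region: Let S = {(d1, d2) ∈ ℝ² : there exist real t1, t2 with 0 ≤ t1 ≤ r1, 0 ≤ t2 ≤ r2, t1 + t2 ≤ r0, 0 ≤ d1 ≤ max(t1 − NE, 0), and 0 ≤ d2 ≤ max(t2 − NE, 0)}. Then the convex hull of S equals the convex hull of P = {p0, p1, p2, p3, p4}. -/
/-!
Write `c(t) = ((t₁ - NE)⁺, (t₂ - NE)⁺)` for the corner of the rectangle of the transmit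
dimensions `t`; then `p₃ = c(r₁, r₀ - r₁)` and `p₄ = c(r₀ - r₂, r₂)`. The map `c` is monotone and
componentwise convex. Every feasible `t` lies below some point `s` of the segment from
`(r₁, r₀ - r₁)` to `(r₀ - r₂, r₂)`, so `c(t) ≤ c(s)` lies below a point `q` of the segment
`[p₃, p₄]`. Since `q ≤ p₁ + p₂`, a convex set containing `(0, 0)`, `p₁`, `p₂` and `q` contains
the box `[0, q]`, hence the whole rectangle of `t`.
-/

open Set

section OrderedField

variable {𝕜 : Type*} [Field 𝕜] [LinearOrder 𝕜] [IsStrictOrderedRing 𝕜]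

theorem Convex.segment_prod_segment_subset {E F : Type*} [AddCommGroup E] [Module 𝕜 E]
    [AddCommGroup F] [Module 𝕜 F] {K : Set (E × F)} (hK : Convex 𝕜 K) {x₀ x₁ : E} {y₀ y₁ : F}
    (h : {x₀, x₁} ×ˢ {y₀, y₁} ⊆ K) : segment 𝕜 x₀ x₁ ×ˢ segment 𝕜 y₀ y₁ ⊆ K := by
  rw [← convexHull_pair, ← convexHull_pair, ← convexHull_prod]
  exact convexHull_min h hK

theorem Convex.Icc_subset_of_corners {K : Set (𝕜 × 𝕜)} (hK : Convex 𝕜 K) {x y : 𝕜 × 𝕜}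
    (hxy : x ≤ y) (hx : x ∈ K) (hyx : (y.1, x.2) ∈ K) (hxy' : (x.1, y.2) ∈ K) (hy : y ∈ K) :
    Icc x y ⊆ K := by
  rw [Icc_prod_eq, ← segment_eq_Icc hxy.1, ← segment_eq_Icc hxy.2]
  refine hK.segment_prod_segment_subset ?_
  rintro ⟨u, v⟩ ⟨rfl | rfl, rfl | rfl⟩ <;> assumption

theorem Convex.Icc_zero_subset {K : Set (𝕜 × 𝕜)} (hK : Convex 𝕜 K) {a b : 𝕜}
    (h0 : (0, 0) ∈ K) (ha : (a, 0) ∈ K) (hb : (0, b) ∈ K) {q : 𝕜 × 𝕜} (hq : q ∈ K)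
    (hq0 : 0 ≤ q) (hqab : q ≤ (a, b)) : Icc 0 q ⊆ K := by
  have hq1 : (q.1, (0 : 𝕜)) ∈ K :=
    hK.Icc_subset_of_corners (x := (0, 0)) (y := (a, 0)) ⟨hq0.1.trans hqab.1, le_rfl⟩ h0 ha h0 ha
      ⟨⟨hq0.1, le_rfl⟩, hqab.1, le_rfl⟩
  have hq2 : ((0 : 𝕜), q.2) ∈ K :=
    hK.Icc_subset_of_corners (x := (0, 0)) (y := (0, b)) ⟨le_rfl, hq0.2.trans hqab.2⟩ h0 h0 hb hb
      ⟨⟨le_rfl, hq0.2⟩, le_rfl, hqab.2⟩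
  exact hK.Icc_subset_of_corners hq0 h0 hq1 hq2 hq

end OrderedField

theorem convexOn_max_sub_zero (c : ℝ) : ConvexOn ℝ univ (fun x : ℝ => max (x - c) 0) :=
  ((convexOn_id convex_univ).add_const (-c)).sup (convexOn_const 0 convex_univ) |>.congr
    (fun x _ => by simp [sub_eq_add_neg])

theorem monotone_max_sub_zero (c : ℝ) : Monotone (fun x : ℝ => max (x - c) 0) :=
  fun _ _ h => max_le_max (sub_le_sub_right h c) le_rfl

def sdofCorner (NE : ℝ) (t : ℝ × ℝ) : ℝ × ℝ := (max (t.1 - NE) 0, max (t.2 - NE) 0)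

theorem sdofCorner_nonneg (NE : ℝ) (t : ℝ × ℝ) : 0 ≤ sdofCorner NE t :=
  ⟨le_max_right _ _, le_max_right _ _⟩

theorem monotone_sdofCorner (NE : ℝ) : Monotone (sdofCorner NE) :=
  fun _ _ h => ⟨monotone_max_sub_zero NE h.1, monotone_max_sub_zero NE h.2⟩

theorem convexOn_sdofCorner (NE : ℝ) : ConvexOn ℝ univ (sdofCorner NE) :=
  ⟨convex_univ, fun _ _ _ _ _ _ ha hb hab =>
    ⟨(convexOn_max_sub_zero NE).2 trivial trivial ha hb hab,
      (convexOn_max_sub_zero NE).2 trivial trivial ha hb hab⟩⟩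

theorem exists_mem_segment_le {r0 r1 r2 t1 t2 : ℝ} (h0 : r0 ≤ r1 + r2) (ht1 : t1 ≤ r1)
    (ht2 : t2 ≤ r2) (ht : t1 + t2 ≤ r0) :
    ∃ s ∈ segment ℝ (r1, r0 - r1) (r0 - r2, r2), (t1, t2) ≤ s := by
  have hs : max t1 (r0 - r2) ∈ segment ℝ r1 (r0 - r2) := by
    rw [segment_symm, segment_eq_Icc (by linarith)]
    exact ⟨le_max_right _ _, max_le ht1 (by linarith)⟩
  obtain ⟨a, b, ha, hb, hab, hs⟩ := hs
  refine ⟨(max t1 (r0 - r2), r0 - max t1 (r0 - r2)), ⟨a, b, ha, hb, hab, ?_⟩,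
    le_max_left _ _, le_sub_comm.mp (max_le (by linarith) (by linarith))⟩
  ext
  · simpa using hs
  · simp only [Prod.snd_add, Prod.smul_snd, smul_eq_mul, ← hs]
    linear_combination r0 * hab

theorem exists_mem_segment_sdofCorner_ge (NE : ℝ) {r0 r1 r2 t1 t2 : ℝ} (h0 : r0 ≤ r1 + r2)
    (ht1 : t1 ≤ r1) (ht2 : t2 ≤ r2) (ht : t1 + t2 ≤ r0) :
    ∃ q ∈ segment ℝ (sdofCorner NE (r1, r0 - r1)) (sdofCorner NE (r0 - r2, r2)),
      sdofCorner NE (t1, t2) ≤ q := by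
  obtain ⟨_, ⟨a, b, ha, hb, hab, rfl⟩, hts⟩ := exists_mem_segment_le h0 ht1 ht2 ht
  exact ⟨_, ⟨a, b, ha, hb, hab, rfl⟩,
    (monotone_sdofCorner NE hts).trans ((convexOn_sdofCorner NE).2 trivial trivial ha hb hab)⟩

theorem segment_sdofCorner_subset_Icc (NE : ℝ) {r0 r1 r2 : ℝ} (h0 : r0 ≤ r1 + r2) :
    segment ℝ (sdofCorner NE (r1, r0 - r1)) (sdofCorner NE (r0 - r2, r2)) ⊆
      Icc 0 (sdofCorner NE (r1, r2)) :=
  (convex_Icc _ _).segment_subset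
    ⟨sdofCorner_nonneg NE _, monotone_sdofCorner NE ⟨le_rfl, by linarith⟩⟩
    ⟨sdofCorner_nonneg NE _, monotone_sdofCorner NE ⟨by linarith, le_rfl⟩⟩

theorem sdof_region_rectangles_general (r0 r1 r2 NE : ℝ)
    (h1 : r1 ≤ r0) (h2 : r2 ≤ r0) (h0 : r0 ≤ r1 + r2) :
    convexHull ℝ
      {d : ℝ × ℝ | ∃ t1 t2 : ℝ, 0 ≤ t1 ∧ t1 ≤ r1 ∧ 0 ≤ t2 ∧ t2 ≤ r2 ∧
        t1 + t2 ≤ r0 ∧ 0 ≤ d.1 ∧ d.1 ≤ max (t1 - NE) 0 ∧ 0 ≤ d.2 ∧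
        d.2 ≤ max (t2 - NE) 0} =
    convexHull ℝ ({((0 : ℝ), (0 : ℝ)),
        (max (r1 - NE) 0, 0),
        (0, max (r2 - NE) 0),
        (max (r1 - NE) 0, max (r0 - r1 - NE) 0),
        (max (r0 - r2 - NE) 0, max (r2 - NE) 0)} : Set (ℝ × ℝ)) := by
  refine (convexHull_min ?_ (convex_convexHull ℝ _)).antisymm (convexHull_mono ?_)
  · rintro d ⟨t1, t2, -, ht1, -, ht2, ht, hd1, hd1t, hd2, hd2t⟩
    obtain ⟨q, hq, htq⟩ := exists_mem_segment_sdofCorner_ge NE h0 ht1 ht2 ht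
    have hq_box := segment_sdofCorner_subset_Icc NE h0 hq
    exact (convex_convexHull ℝ _).Icc_zero_subset (subset_convexHull ℝ _ (by simp))
      (subset_convexHull ℝ _ (by simp)) (subset_convexHull ℝ _ (by simp))
      (segment_subset_convexHull (by simp [sdofCorner]) (by simp [sdofCorner]) hq)
      hq_box.1 hq_box.2 ⟨⟨hd1, hd2⟩, le_trans ⟨hd1t, hd2t⟩ htq⟩
  · rintro p (rfl | rfl | rfl | rfl | rfl)
      <;> [refine ⟨0, 0, ?_⟩; refine ⟨r1, 0, ?_⟩; refine ⟨0, r2, ?_⟩; refine ⟨r1, r0 - r1, ?_⟩;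
        refine ⟨r0 - r2, r2, ?_⟩]
      <;> refine ⟨?_, ?_, ?_, ?_, ?_, ?_, ?_, ?_, ?_⟩
      <;> first | exact le_max_right _ _ | exact le_rfl | linarith

/-- Rectangle interpretation of the s.d.o.f. region: the convex hull of the union of
rectangles `S` (parameterized by transmit dimensions `(t1, t2)`) equals the convex
hull of the five corner points of Theorem 1. -/
theorem sdof_region_rectangles (r0 r1 r2 NE : ℝ)
    (hNE : 0 ≤ NE) (h1 : r1 ≤ r0) (h2 : r2 ≤ r0) (h0 : r0 ≤ r1 + r2) :
    convexHull ℝ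
      {d : ℝ × ℝ | ∃ t1 t2 : ℝ, 0 ≤ t1 ∧ t1 ≤ r1 ∧ 0 ≤ t2 ∧ t2 ≤ r2 ∧
        t1 + t2 ≤ r0 ∧ 0 ≤ d.1 ∧ d.1 ≤ max (t1 - NE) 0 ∧ 0 ≤ d.2 ∧
        d.2 ≤ max (t2 - NE) 0} =
    convexHull ℝ ({((0 : ℝ), (0 : ℝ)),
        (max (r1 - NE) 0, 0),
        (0, max (r2 - NE) 0),
        (max (r1 - NE) 0, max (r0 - r1 - NE) 0),
        (max (r0 - r2 - NE) 0, max (r2 - NE) 0)} : Set (ℝ × ℝ)) :=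
  sdof_region_rectangles_general r0 r1 r2 NE h1 h2 h0
end

section
/- Extreme points of the case-(a) region: Assume additionally NE < r1, NE < r2, NE < r0 − r1, NE < r0 − r2, and r0 < r1 + r2. Let K = {(d1, d2) ∈ ℝ² : 0 ≤ d1 ≤ r1 − NE, 0 ≤ d2 ≤ r2 − NE, d1 + d2 ≤ r0 − 2·NE}. Then the set of extreme points of K is exactly {(0,0), (r1−NE, 0), (0, r2−NE), (r1−NE, r0−r1−NE), (r0−r2−NE, r2−NE)}. -/
/-! A point of the cut box is not extreme as soon as some nonzero direction is parallel to every
constraint active at it; the directions `(1, 0)`, `(0, 1)` and `(1, -1)` then leave only the five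
corners. Conversely each corner is the unique maximiser on the box of a linear functional
(`-x - y`, `x - y`, `y - x`, `2x + y`, `x + 2y` respectively), hence exposed, hence extreme. -/

open Filter Topology Set

section

variable {E : Type*} [AddCommGroup E] [Module ℝ E]

theorem notMem_extremePoints_of_eventually_add_smul_mem {s : Set E} {x v : E} (hv : v ≠ 0)
    (h : ∀ᶠ t : ℝ in 𝓝 0, x + t • v ∈ s) : x ∉ s.extremePoints ℝ := by
  intro hx
  have hboth : ∀ᶠ t : ℝ in 𝓝[≠] 0, t ∈ ({0}ᶜ : Set ℝ) ∧ x + t • v ∈ s ∧ x + (-t) • v ∈ s :=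
    eventually_mem_nhdsWithin.and <| nhdsWithin_le_nhds <|
      h.and ((continuous_neg.tendsto' 0 0 neg_zero).eventually h)
  obtain ⟨t, ht, hplus, hminus⟩ := hboth.exists
  have hmid : x ∈ openSegment ℝ (x + t • v) (x + (-t) • v) :=
    ⟨1 / 2, 1 / 2, by norm_num, by norm_num, by norm_num, by module⟩
  exact smul_ne_zero ht hv (add_eq_left.mp (hx.2 hplus hminus hmid))

end

theorem eventually_add_mul_le {x y k : ℝ} (hx : x ≤ k) (h : x = k → y = 0) :
    ∀ᶠ t in 𝓝 0, x + t * y ≤ k := by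
  rcases hx.lt_or_eq with hlt | heq
  · have : Tendsto (fun t : ℝ => x + t * y) (𝓝 0) (𝓝 x) :=
      (continuous_const.add (continuous_id.mul continuous_const)).tendsto' 0 x (by simp)
    exact this.eventually (eventually_le_nhds hlt)
  · exact .of_forall fun t => by simp [h heq, heq]

theorem eventually_le_add_mul {x y k : ℝ} (hx : k ≤ x) (h : x = k → y = 0) :
    ∀ᶠ t in 𝓝 0, k ≤ x + t * y :=
  (eventually_add_mul_le (neg_le_neg hx) fun e => neg_eq_zero.mpr (h (neg_inj.mp e))).mono
    fun t ht => by linarith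

theorem Prod.mem_extremePoints_of_unique_maximizer (α β : ℝ) {s : Set (ℝ × ℝ)} {p : ℝ × ℝ}
    (hp : p ∈ s) (h : ∀ q ∈ s, α * q.1 + β * q.2 ≤ α * p.1 + β * p.2 ∧
      (α * p.1 + β * p.2 ≤ α * q.1 + β * q.2 → q = p)) :
    p ∈ s.extremePoints ℝ :=
  exposedPoints_subset_extremePoints
    ⟨hp, α • ContinuousLinearMap.fst ℝ ℝ ℝ + β • ContinuousLinearMap.snd ℝ ℝ ℝ, by simpa using h⟩

def cutBox (a b c : ℝ) : Set (ℝ × ℝ) :=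
  {d | 0 ≤ d.1 ∧ d.1 ≤ a ∧ 0 ≤ d.2 ∧ d.2 ≤ b ∧ d.1 + d.2 ≤ c}

def cutBoxVertices (a b c : ℝ) : Set (ℝ × ℝ) :=
  {(0, 0), (a, 0), (0, b), (a, c - a), (c - b, b)}

section

variable {a b c : ℝ}

theorem notMem_extremePoints_cutBox {p v : ℝ × ℝ} (hv : v ≠ 0) (hp : p ∈ cutBox a b c)
    (h₁ : p.1 = 0 → v.1 = 0) (h₂ : p.1 = a → v.1 = 0) (h₃ : p.2 = 0 → v.2 = 0)
    (h₄ : p.2 = b → v.2 = 0) (h₅ : p.1 + p.2 = c → v.1 + v.2 = 0) :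
    p ∉ (cutBox a b c).extremePoints ℝ := by
  obtain ⟨h0x, hxa, h0y, hyb, hxyc⟩ := hp
  refine notMem_extremePoints_of_eventually_add_smul_mem hv ?_
  filter_upwards [eventually_le_add_mul h0x h₁, eventually_add_mul_le hxa h₂,
    eventually_le_add_mul h0y h₃, eventually_add_mul_le hyb h₄,
    eventually_add_mul_le hxyc h₅] with t e₁ e₂ e₃ e₄ e₅
  simp only [cutBox, mem_ofPred_eq, Prod.fst_add, Prod.snd_add, Prod.smul_fst, Prod.smul_snd,
    smul_eq_mul]
  exact ⟨e₁, e₂, e₃, e₄, by linarith⟩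

theorem cutBoxVertices_subset_extremePoints (hac : a ≤ c) (hbc : b ≤ c) (hcab : c ≤ a + b) :
    cutBoxVertices a b c ⊆ (cutBox a b c).extremePoints ℝ := by
  rintro _ (rfl | rfl | rfl | rfl | rfl) <;>
    [refine Prod.mem_extremePoints_of_unique_maximizer (-1) (-1) ?_ ?_;
     refine Prod.mem_extremePoints_of_unique_maximizer 1 (-1) ?_ ?_;
     refine Prod.mem_extremePoints_of_unique_maximizer (-1) 1 ?_ ?_;
     refine Prod.mem_extremePoints_of_unique_maximizer 2 1 ?_ ?_;
     refine Prod.mem_extremePoints_of_unique_maximizer 1 2 ?_ ?_] <;>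
    first
    | exact ⟨by linarith, by linarith, by linarith, by linarith, by linarith⟩
    | rintro ⟨x, y⟩ ⟨h₁, h₂, h₃, h₄, h₅⟩
      dsimp only at *
      exact ⟨by linarith, fun h => Prod.ext (by linarith) (by linarith)⟩

theorem extremePoints_cutBox_subset (hac : a ≤ c) (hbc : b ≤ c) (hcab : c ≤ a + b) :
    (cutBox a b c).extremePoints ℝ ⊆ cutBoxVertices a b c := by
  rintro ⟨x, y⟩ hp
  obtain ⟨h0x, hxa, h0y, hyb, hxyc⟩ := hp.1
  have hx : x = 0 ∨ x = a ∨ x + y = c := by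
    by_contra! h
    exact notMem_extremePoints_cutBox (v := (1, 0)) (by simp) hp.1 (absurd · h.1)
      (absurd · h.2.1) (fun _ => rfl) (fun _ => rfl) (absurd · h.2.2) hp
  have hy : y = 0 ∨ y = b ∨ x + y = c := by
    by_contra! h
    exact notMem_extremePoints_cutBox (v := (0, 1)) (by simp) hp.1 (fun _ => rfl)
      (fun _ => rfl) (absurd · h.1) (absurd · h.2.1) (absurd · h.2.2) hp
  have hxy : x = 0 ∨ x = a ∨ y = 0 ∨ y = b := by
    by_contra! h
    exact notMem_extremePoints_cutBox (v := (1, -1)) (by simp) hp.1 (absurd · h.1)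
      (absurd · h.2.1) (absurd · h.2.2.1) (absurd · h.2.2.2) (fun _ => by norm_num) hp
  simp only [cutBoxVertices, mem_insert_iff, mem_singleton_iff, Prod.mk.injEq]
  grind

theorem extremePoints_cutBox (hac : a ≤ c) (hbc : b ≤ c) (hcab : c ≤ a + b) :
    (cutBox a b c).extremePoints ℝ = cutBoxVertices a b c :=
  (extremePoints_cutBox_subset hac hbc hcab).antisymm
    (cutBoxVertices_subset_extremePoints hac hbc hcab)

end

theorem sdof_region_case_a_extremePoints_general (r0 r1 r2 NE : ℝ)
    (hs3 : NE < r0 - r1) (hs4 : NE < r0 - r2)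
    (hs5 : r0 < r1 + r2) :
    Set.extremePoints ℝ
      {d : ℝ × ℝ | 0 ≤ d.1 ∧ d.1 ≤ r1 - NE ∧ 0 ≤ d.2 ∧ d.2 ≤ r2 - NE ∧
        d.1 + d.2 ≤ r0 - 2 * NE} =
    ({((0 : ℝ), (0 : ℝ)),
      (r1 - NE, 0),
      (0, r2 - NE),
      (r1 - NE, r0 - r1 - NE),
      (r0 - r2 - NE, r2 - NE)} : Set (ℝ × ℝ)) := by
  rw [show r0 - r1 - NE = r0 - 2 * NE - (r1 - NE) by ring,
    show r0 - r2 - NE = r0 - 2 * NE - (r2 - NE) by ring]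
  exact extremePoints_cutBox (by linarith) (by linarith) (by linarith)

/-- Extreme points of the case-(a) region: under the strict hypotheses
`NE < r1`, `NE < r2`, `NE < r0 - r1`, `NE < r0 - r2`, `r0 < r1 + r2`, the set of
extreme points of `K = {(d1,d2) : 0 ≤ d1 ≤ r1 - NE, 0 ≤ d2 ≤ r2 - NE,
d1 + d2 ≤ r0 - 2 NE}` is exactly the five corner points of Theorem 1. -/
theorem sdof_region_case_a_extremePoints (r0 r1 r2 NE : ℝ)
    (hNE : 0 ≤ NE) (h1 : r1 ≤ r0) (h2 : r2 ≤ r0) (h0 : r0 ≤ r1 + r2)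
    (hs1 : NE < r1) (hs2 : NE < r2) (hs3 : NE < r0 - r1) (hs4 : NE < r0 - r2)
    (hs5 : r0 < r1 + r2) :
    Set.extremePoints ℝ
      {d : ℝ × ℝ | 0 ≤ d.1 ∧ d.1 ≤ r1 - NE ∧ 0 ≤ d.2 ∧ d.2 ≤ r2 - NE ∧
        d.1 + d.2 ≤ r0 - 2 * NE} =
    ({((0 : ℝ), (0 : ℝ)),
      (r1 - NE, 0),
      (0, r2 - NE),
      (r1 - NE, r0 - r1 - NE),
      (r0 - r2 - NE, r2 - NE)} : Set (ℝ × ℝ)) :=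
  sdof_region_case_a_extremePoints_general r0 r1 r2 NE hs3 hs4 hs5
end

section
/- Covering multiplicity of the recursive construction: every element k ∈ G = {1, …, g} belongs to exactly f of the sets F_1, F_2, …, F_g; that is, the cardinality of {i : 1 ≤ i ≤ g and k ∈ F_i} equals f. -/
/-- The set of the `f` smallest elements of a finite set `S` of naturals. -/
def takeMin (S : Finset ℕ) (f : ℕ) : Finset ℕ :=
  ((S.sort (· ≤ ·)).take f).toFinset

/-- The pair `(V_i, c_i)` of Definition 1 of the paper: `V_0 = {1, …, g}`, `c_0 = 1`;
in Case I (`|V_{i-1}| ≥ f`), `F_i` is the set of the `f` smallest elements of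
`V_{i-1}`, `V_i = V_{i-1} \ F_i` and `c_i = c_{i-1}`; in Case II (`|V_{i-1}| < f`),
`H_i = {1, …, f - |V_{i-1}|}`, `V_i = {1, …, g} \ H_i` and `c_i = c_{i-1} + 1`. -/
def paperVc (g f : ℕ) : ℕ → Finset ℕ × ℕ
  | 0 => (Finset.Icc 1 g, 1)
  | (i + 1) =>
    let V := (paperVc g f i).1
    let c := (paperVc g f i).2
    if f ≤ V.card then
      (V \ takeMin V f, c)
    else
      (Finset.Icc 1 g \ Finset.Icc 1 (f - V.card), c + 1)

/-- The set `F_i` of Definition 1 of the paper (`i ≥ 1`): the `f` smallest elements of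
`V_{i-1}` in Case I, and `V_{i-1} ∪ H_i` in Case II. -/
def paperF (g f : ℕ) (i : ℕ) : Finset ℕ :=
  let V := (paperVc g f (i - 1)).1
  if f ≤ V.card then takeMin V f
  else V ∪ Finset.Icc 1 (f - V.card)

/-- `H_i` of Case II of Definition 1. -/
def paperH (g f : ℕ) (i : ℕ) : Finset ℕ :=
  Finset.Icc 1 (f - (paperVc g f (i - 1)).1.card)

/-!
By induction, `V_j = (s, g]` for some `s ≤ g` with `s ≡ j f [MOD g]`. Hence `F_i` is the image
of the window of positions `[(i - 1) f, i f)` under `m ↦ m % g + 1`, i.e. `F_1, …, F_g` are the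
consecutive length-`f` windows of `f` copies of `G` laid end to end. So `k ∈ F_i` iff window `i`
contains one of the `f` positions `q g + (k - 1)`, `q < f`, and no window of length `f ≤ g`
contains two of them.
-/

open Finset

theorem takeMin_Ioc {a b n : ℕ} (h : a + n ≤ b) : takeMin (Ioc a b) n = Ioc a (a + n) := by
  have hIoc : ∀ c, (List.range' (a + 1) (c - a)).toFinset = Ioc a c := by
    intro c; ext; simp only [List.mem_toFinset, List.mem_range'_1, mem_Ioc]; omega
  unfold takeMin
  rw [← hIoc b, (List.toFinset_sort _ List.nodup_range').mpr List.pairwise_le_range',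
    List.take_range'_of_length_ge (by omega), ← hIoc (a + n), Nat.add_sub_cancel_left]

theorem paperVc_fst_eq_Ioc {g f : ℕ} (hfg : f ≤ g) (j : ℕ) :
    ∃ s ≤ g, s ≡ j * f [MOD g] ∧ (paperVc g f j).1 = Ioc s g := by
  induction j with
  | zero => exact ⟨0, Nat.zero_le g, by rw [zero_mul], rfl⟩
  | succ j ih =>
    obtain ⟨s, hsg, hs, hV⟩ := ih
    have hstep : (j + 1) * f = j * f + f := by ring
    simp only [paperVc, hV, Nat.card_Ioc]
    split_ifs with hfit
    · refine ⟨s + f, by omega, hstep ▸ hs.add_right f, ?_⟩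
      rw [takeMin_Ioc (by omega)]
      ext; simp only [mem_sdiff, mem_Ioc]; omega
    · refine ⟨s + f - g, by omega, ?_, ?_⟩
      · rw [hstep]
        calc s + f - g ≡ s + f - g + g [MOD g] := (Nat.add_modEq_right).symm
          _ = s + f := by omega
          _ ≡ j * f + f [MOD g] := hs.add_right f
      · ext; simp only [mem_sdiff, mem_Icc, mem_Ioc]; omega

theorem image_Ico_mod_congr {α : Type*} [DecidableEq α] (φ : ℕ → α) {g a b : ℕ}
    (hab : a ≡ b [MOD g]) (n : ℕ) :
    (Ico a (a + n)).image (fun m => φ (m % g)) = (Ico b (b + n)).image (fun m => φ (m % g)) := by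
  wlog hle : a ≤ b generalizing a b
  · exact (this hab.symm (by omega)).symm
  obtain ⟨c, rfl⟩ := Nat.exists_eq_add_of_le hle
  have hc : c ≡ 0 [MOD g] := (Nat.ModEq.add_left_cancel' a (by simpa using hab)).symm
  rw [show a + c + n = a + n + c by ring, ← image_add_right_Ico, image_image]
  congr 1
  funext m
  exact congrArg φ (hc.add_left m).symm

theorem mem_image_Ico_mod_add_one {g s n k : ℕ} (hs : s ≤ g) (hn : n ≤ g) :
    k ∈ (Ico s (s + n)).image (fun m => m % g + 1) ↔
      (s < k ∧ k ≤ g ∧ k ≤ s + n) ∨ (1 ≤ k ∧ k + g ≤ s + n) := by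
  simp only [mem_image, mem_Ico]
  constructor
  · rintro ⟨m, ⟨hsm, hm⟩, rfl⟩
    by_cases hmg : m < g
    · rw [Nat.mod_eq_of_lt hmg]; omega
    · rw [Nat.mod_eq_sub_mod (by omega), Nat.mod_eq_of_lt (by omega)]; omega
  · rintro (h | h)
    · exact ⟨k - 1, by omega, by rw [Nat.mod_eq_of_lt (by omega)]; omega⟩
    · refine ⟨k - 1 + g, by omega, ?_⟩
      rw [Nat.add_mod_right, Nat.mod_eq_of_lt (by omega)]; omega

theorem paperF_eq_image {g f i : ℕ} (hfg : f ≤ g) (hi : 1 ≤ i) :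
    paperF g f i = (Ico ((i - 1) * f) (i * f)).image (fun m => m % g + 1) := by
  obtain ⟨s, hsg, hs, hV⟩ := paperVc_fst_eq_Ioc hfg (i - 1)
  have hend : i * f = (i - 1) * f + f := by
    obtain ⟨j, rfl⟩ := Nat.exists_eq_add_of_le' hi
    simp only [Nat.add_sub_cancel]; ring
  rw [hend, image_Ico_mod_congr (· + 1) hs.symm]
  ext k
  rw [mem_image_Ico_mod_add_one hsg hfg]
  simp only [paperF, hV, Nat.card_Ioc]
  split_ifs with hfit
  · rw [takeMin_Ioc (by omega), mem_Ioc]; omega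
  · simp only [mem_union, mem_Ioc, mem_Icc]; omega

theorem filter_Icc_exists_mod_eq_image {g f r : ℕ} (hr : r < g) :
    (Icc 1 g).filter (fun i => ∃ m ∈ Ico ((i - 1) * f) (i * f), m % g = r) =
      (range f).image (fun q => (q * g + r) / f + 1) := by
  ext i
  simp only [mem_filter, mem_Icc, mem_Ico, mem_image, mem_range]
  constructor
  · rintro ⟨⟨hi1, hig⟩, m, ⟨hlo, hhi⟩, hm⟩
    have hwin : m / f = i - 1 := Nat.div_eq_of_lt_le hlo (by rwa [Nat.sub_add_cancel hi1])
    refine ⟨m / g, ?_, ?_⟩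
    · rw [Nat.div_lt_iff_lt_mul (by omega)]
      exact hhi.trans_le (Nat.mul_le_mul_right f hig) |>.trans_eq (mul_comm g f)
    · rw [← hm, Nat.div_add_mod', hwin]; omega
  · rintro ⟨q, hq, rfl⟩
    have hf : 0 < f := by omega
    have hlt : q * g + r < g * f :=
      calc q * g + r < (q + 1) * g := by rw [add_one_mul]; omega
        _ ≤ f * g := Nat.mul_le_mul_right g hq
        _ = g * f := mul_comm f g
    refine ⟨⟨Nat.le_add_left 1 _, ?_⟩, q * g + r, ⟨?_, ?_⟩, ?_⟩
    · rwa [Nat.add_one_le_iff, Nat.div_lt_iff_lt_mul hf]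
    · rw [Nat.add_sub_cancel]; exact Nat.div_mul_le_self _ f
    · exact (Nat.lt_mul_div_succ _ hf).trans_eq (mul_comm _ _)
    · rw [mul_comm, Nat.mul_add_mod, Nat.mod_eq_of_lt hr]

theorem strictMono_mul_add_div {g f r : ℕ} (hf : 0 < f) (hfg : f ≤ g) :
    StrictMono fun q => (q * g + r) / f :=
  strictMono_nat_of_lt_succ fun q =>
    calc (q * g + r) / f < (q * g + r) / f + 1 := Nat.lt_add_one _
      _ = (q * g + r + f) / f := (Nat.add_div_right _ hf).symm
      _ ≤ ((q + 1) * g + r) / f := Nat.div_le_div_right (by rw [add_one_mul]; omega)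

theorem paperF_covering_multiplicity_general (g f : ℕ) (hfg : f ≤ g)
    (k : ℕ) (hk : k ∈ Finset.Icc 1 g) :
    ((Finset.Icc 1 g).filter (fun i => k ∈ paperF g f i)).card = f := by
  obtain ⟨hk1, hkg⟩ := mem_Icc.mp hk
  have hmem : ∀ i ∈ Icc 1 g,
      k ∈ paperF g f i ↔ ∃ m ∈ Ico ((i - 1) * f) (i * f), m % g = k - 1 := fun i hi => by
    rw [paperF_eq_image hfg (mem_Icc.mp hi).1, mem_image]
    exact exists_congr fun m => and_congr_right fun _ => by omega
  rw [filter_congr hmem, filter_Icc_exists_mod_eq_image (by omega), card_image_of_injOn,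
    card_range]
  intro q hq q' _ h
  exact (strictMono_mul_add_div (r := k - 1) (Nat.zero_lt_of_lt (mem_range.mp hq)) hfg).injective
    (Nat.add_right_cancel h)

/-- Covering multiplicity: every `k ∈ G = {1, …, g}` belongs to exactly `f` of the
sets `F_1, …, F_g`. -/
theorem paperF_covering_multiplicity (g f : ℕ) (hf : 1 ≤ f) (hfg : f ≤ g)
    (k : ℕ) (hk : k ∈ Finset.Icc 1 g) :
    ((Finset.Icc 1 g).filter (fun i => k ∈ paperF g f i)).card = f :=
  paperF_covering_multiplicity_general g f hfg k hk
end

section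
/- Weighted-sum identity for the recursive construction: for every function x : {1, …, g} → ℝ, the double sum over i from 1 to g of (the sum of x(k) over k ∈ F_i) equals f times the sum of x(k) over k ∈ G = {1, …, g}; that is, ∑_{i=1}^{g} ∑_{k ∈ F_i} x(k) = f · ∑_{k=1}^{g} x(k). -/
open Finset

lemma takeMin_subset (S : Finset ℕ) (f : ℕ) : takeMin S f ⊆ S := fun k hk => by
  simpa [takeMin] using List.mem_of_mem_take (List.mem_toFinset.1 hk)

lemma sort_Ico_add (a n : ℕ) : (Ico a (a + n)).sort (· ≤ ·) = List.range' a n := by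
  rw [← List.toFinset_range'_1, List.toFinset_sort _ List.nodup_range']
  exact (List.pairwise_lt_range' (s := a) (n := n)).imp le_of_lt

lemma takeMin_Ico_add {a n f : ℕ} (h : f ≤ n) : takeMin (Ico a (a + n)) f = Ico a (a + f) := by
  rw [takeMin, sort_Ico_add, List.take_range'_of_length_ge h, List.toFinset_range'_1]

section

variable {g f : ℕ}

lemma paperVc_succ_of_le {i : ℕ} (h : f ≤ (paperVc g f i).1.card) :
    paperVc g f (i + 1) =
      ((paperVc g f i).1 \ takeMin (paperVc g f i).1 f, (paperVc g f i).2) :=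
  if_pos h

lemma paperVc_succ_of_lt {i : ℕ} (h : (paperVc g f i).1.card < f) :
    paperVc g f (i + 1) =
      (Icc 1 g \ Icc 1 (f - (paperVc g f i).1.card), (paperVc g f i).2 + 1) :=
  if_neg h.not_ge

lemma paperF_succ_of_le {i : ℕ} (h : f ≤ (paperVc g f i).1.card) :
    paperF g f (i + 1) = takeMin (paperVc g f i).1 f :=
  if_pos h

lemma paperF_succ_of_lt {i : ℕ} (h : (paperVc g f i).1.card < f) :
    paperF g f (i + 1) = (paperVc g f i).1 ∪ Icc 1 (f - (paperVc g f i).1.card) :=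
  if_neg h.not_ge

lemma exists_paperVc_eq_Ico (hfg : f ≤ g) (i : ℕ) :
    ∃ n ≤ g, (paperVc g f i).1 = Ico (g + 1 - n) (g + 1) ∧
      (paperVc g f i).2 * g = i * f + n := by
  induction i with
  | zero =>
    refine ⟨g, le_rfl, ?_, by simp [paperVc]⟩
    ext k
    simp only [paperVc, mem_Icc, mem_Ico]
    omega
  | succ i ih =>
    obtain ⟨n, hng, hV, hc⟩ := ih
    have hcard : (paperVc g f i).1.card = n := by
      rw [hV, Nat.card_Ico]
      omega
    rcases le_or_gt f n with hfn | hnf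
    · refine ⟨n - f, by omega, ?_, ?_⟩
      · have hV' : (paperVc g f i).1 = Ico (g + 1 - n) (g + 1 - n + n) := by
          rw [hV]
          congr 1
          omega
        rw [paperVc_succ_of_le (hcard ▸ hfn), hV', takeMin_Ico_add hfn]
        ext k
        simp only [mem_sdiff, mem_Ico]
        omega
      · rw [paperVc_succ_of_le (hcard ▸ hfn), add_one_mul, hc]
        omega
    · refine ⟨g - (f - n), by omega, ?_, ?_⟩
      · rw [paperVc_succ_of_lt (hcard ▸ hnf), hcard]
        ext k
        simp only [mem_sdiff, mem_Icc, mem_Ico]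
        omega
      · rw [paperVc_succ_of_lt (hcard ▸ hnf), add_one_mul, add_one_mul, hc]
        omega

lemma paperVc_self_eq_empty_or_eq_Icc (hfg : f ≤ g) :
    ((paperVc g f g).1 = ∅ ∧ (paperVc g f g).2 = f) ∨
      ((paperVc g f g).1 = Icc 1 g ∧ (paperVc g f g).2 = f + 1) := by
  obtain ⟨n, hng, hV, hc⟩ := exists_paperVc_eq_Ico hfg g
  rcases g.eq_zero_or_pos with rfl | hg
  · exact Or.inr ⟨rfl, by change 1 = f + 1; omega⟩
  rcases le_or_gt (paperVc g f g).2 f with hcf | hfc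
  · have hn : n = 0 := by nlinarith [Nat.mul_le_mul_right g hcf]
    refine Or.inl ⟨by simp [hV, hn], Nat.eq_of_mul_eq_mul_right hg ?_⟩
    rw [hc, hn]
    ring
  · have hn : n = g := by nlinarith [Nat.mul_le_mul_right g (Nat.succ_le_of_lt hfc)]
    refine Or.inr ⟨?_, Nat.eq_of_mul_eq_mul_right hg ?_⟩
    · rw [hV, hn]
      ext k
      simp only [mem_Icc, mem_Ico]
      omega
    · rw [hc, hn]
      ring

variable {M : Type*}

lemma sum_paperF_add_sum_paperVc [AddCommMonoid M] (hfg : f ≤ g) (x : ℕ → M) (m : ℕ) :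
    ∑ i ∈ Icc 1 m, ∑ k ∈ paperF g f i, x k + ∑ k ∈ (paperVc g f m).1, x k =
      (paperVc g f m).2 • ∑ k ∈ Icc 1 g, x k := by
  induction m with
  | zero => simp [paperVc]
  | succ m ih =>
    obtain ⟨n, hng, hV, -⟩ := exists_paperVc_eq_Ico hfg m
    have hcard : (paperVc g f m).1.card = n := by
      rw [hV, Nat.card_Ico]
      omega
    rw [sum_Icc_succ_top (by omega), add_assoc]
    rcases le_or_gt f (paperVc g f m).1.card with hfV | hVf
    · rw [paperF_succ_of_le hfV, paperVc_succ_of_le hfV, add_comm (∑ k ∈ takeMin _ f, x k),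
        sum_sdiff (takeMin_subset _ f)]
      exact ih
    · have hdisj : Disjoint (paperVc g f m).1 (Icc 1 (f - (paperVc g f m).1.card)) := by
        rw [disjoint_left, hcard, hV]
        simp only [mem_Ico, mem_Icc]
        omega
      have hH : Icc 1 (f - (paperVc g f m).1.card) ⊆ Icc 1 g :=
        Icc_subset_Icc le_rfl (by omega)
      rw [paperF_succ_of_lt hVf, paperVc_succ_of_lt hVf, sum_union hdisj, add_assoc,
        add_comm (∑ k ∈ Icc 1 (f - _), x k), sum_sdiff hH, ← add_assoc, ih, succ_nsmul]

lemma sum_paperF_eq_nsmul [AddCancelCommMonoid M] (hfg : f ≤ g) (x : ℕ → M) :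
    ∑ i ∈ Icc 1 g, ∑ k ∈ paperF g f i, x k = f • ∑ k ∈ Icc 1 g, x k := by
  have h := sum_paperF_add_sum_paperVc hfg x g
  rcases paperVc_self_eq_empty_or_eq_Icc hfg with ⟨hV, hc⟩ | ⟨hV, hc⟩
  · simpa [hV, hc] using h
  · rw [hV, hc, succ_nsmul] at h
    exact add_right_cancel h

end

theorem paperF_weighted_sum_general (g f : ℕ) (hfg : f ≤ g) (x : ℕ → ℝ) :
    ∑ i ∈ Finset.Icc 1 g, ∑ k ∈ paperF g f i, x k =
      (f : ℝ) * ∑ k ∈ Finset.Icc 1 g, x k := by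
  rw [sum_paperF_eq_nsmul hfg x, nsmul_eq_mul]

/-- Weighted-sum identity: for every `x : ℕ → ℝ`,
`∑_{i=1}^{g} ∑_{k ∈ F_i} x k = f * ∑_{k=1}^{g} x k`. -/
theorem paperF_weighted_sum (g f : ℕ) (hf : 1 ≤ f) (hfg : f ≤ g) (x : ℕ → ℝ) :
    ∑ i ∈ Finset.Icc 1 g, ∑ k ∈ paperF g f i, x k =
      (f : ℝ) * ∑ k ∈ Finset.Icc 1 g, x k :=
  paperF_weighted_sum_general g f hfg x
end

section
/- Terminal values of the recursive construction (equation (40) of the paper): after g steps one has c_g = f and V_g = ∅. -/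
theorem takeMin_Icc (a b f : ℕ) :
    takeMin (Finset.Icc a b) f = Finset.Ico a (min (a + f) (b + 1)) := by
  have hsort : (Finset.Icc a b).sort (· ≤ ·) = List.range' a (b + 1 - a) := by
    rw [Nat.Icc_eq_range']
    exact List.mergeSort_eq_self _ (List.pairwise_le_range' ..)
  ext x
  simp only [takeMin, hsort, List.range'_eq_map_range, ← List.map_take, List.take_range,
    List.mem_toFinset, List.mem_map, List.mem_range, lt_inf_iff, Finset.mem_Ico]
  constructor
  · omega
  · exact fun _ => ⟨x - a, by omega, by omega⟩

theorem Icc_sdiff_takeMin (a b f : ℕ) :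
    Finset.Icc a b \ takeMin (Finset.Icc a b) f = Finset.Icc (a + f) b := by
  ext x
  simp only [takeMin_Icc, Finset.mem_sdiff, Finset.mem_Icc, Finset.mem_Ico]
  omega

theorem Icc_one_sdiff_Icc_one (g k : ℕ) :
    Finset.Icc 1 g \ Finset.Icc 1 k = Finset.Icc (k + 1) g := by
  ext x
  simp only [Finset.mem_sdiff, Finset.mem_Icc]
  omega

theorem Nat.eq_and_eq_of_mul_add_one_eq_mul_add {g f c r : ℕ} (hr : 0 < r) (hrg : r ≤ g)
    (h : g * (f + 1) = g * c + r) : c = f ∧ r = g := by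
  obtain rfl : c = f := by
    rcases lt_trichotomy c f with hc | hc | hc
    · nlinarith
    · exact hc
    · nlinarith
  rw [mul_add_one] at h
  omega

theorem paperVc_succ_of_fst_eq_Icc {g f i r : ℕ} (h : (paperVc g f i).1 = Finset.Icc (r + 1) g) :
    paperVc g f (i + 1) =
      if f ≤ g - r then (Finset.Icc (r + f + 1) g, (paperVc g f i).2)
      else (Finset.Icc (f - (g - r) + 1) g, (paperVc g f i).2 + 1) := by
  have hcard : (paperVc g f i).1.card = g - r := by rw [h, Nat.card_Icc]; omega
  rw [paperVc]
  simp only [hcard]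
  split_ifs
  · rw [h, Icc_sdiff_takeMin, add_right_comm]
  · rw [Icc_one_sdiff_Icc_one]

theorem exists_paperVc_eq_Icc {g f : ℕ} (hf : 1 ≤ f) (hfg : f ≤ g) (i : ℕ) :
    ∃ r ≤ g, (i ≠ 0 → 0 < r) ∧ (paperVc g f i).1 = Finset.Icc (r + 1) g ∧
      f * i + g = g * (paperVc g f i).2 + r := by
  induction i with
  | zero => exact ⟨0, by simp [paperVc]⟩
  | succ i ih =>
    obtain ⟨r, hrg, -, hV, hcount⟩ := ih
    rw [paperVc_succ_of_fst_eq_Icc hV]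
    split_ifs with hcase <;> dsimp only
    · exact ⟨r + f, by omega, by omega, rfl, by rw [mul_add_one]; omega⟩
    · exact ⟨f - (g - r), by omega, by omega, rfl, by rw [mul_add_one, mul_add_one]; omega⟩

/-- Terminal values of the recursive construction (equation (40) of the paper):
`c_g = f` and `V_g = ∅`. -/
theorem paperVc_terminal (g f : ℕ) (hf : 1 ≤ f) (hfg : f ≤ g) :
    (paperVc g f g).2 = f ∧ (paperVc g f g).1 = ∅ := by
  obtain ⟨r, hrg, hr, hV, hcount⟩ := exists_paperVc_eq_Icc hf hfg g
  have hcount' : g * (f + 1) = g * (paperVc g f g).2 + r := by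
    rw [mul_add_one, mul_comm g f, hcount]
  obtain ⟨hc, hr_eq⟩ := Nat.eq_and_eq_of_mul_add_one_eq_mul_add (hr (by omega)) hrg hcount'
  exact ⟨hc, hV.trans (Finset.Icc_eq_empty (by omega))⟩
end
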